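/- Let G be an abelian group in which every nonzero element has order 3, containing two independent elements e_1, e_2 of order 3. Set U = (e_1+e_2)^3 and V = (e_1+e_2)·e_1^2·e_2^2. Then U·V has exactly two factorizations: U·V and (e_1·e_2·(e_1+e_2)^2)·(e_1·e_2·(e_1+e_2)^2); consequently t(U·V, U) = 2. -/

import Mathlib

/-- A minimal zero-sum sequence over the abelian group `G`: a nonempty zero-sum
multiset none of whose proper nonempty sub-multisets has sum zero. -/
def IsMinZeroSum {G : Type*} [AddCommGroup G] (S : Multiset G) : Prop :=
  S ≠ 0 ∧ S.sum = 0 ∧ ∀ T ≤ S, T ≠ 0 → T.sum = 0 → T = S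

/-- A factorization of a zero-sum sequence `B` into atoms of `B(G)`. -/
def IsFactorization {G : Type*} [AddCommGroup G] (B : Multiset G)
    (z : Multiset (Multiset G)) : Prop :=
  (∀ A ∈ z, IsMinZeroSum A) ∧ z.sum = B

/-- The usual distance between two factorizations. -/
noncomputable def factDist {G : Type*} [AddCommGroup G] (z z' : Multiset (Multiset G)) : ℕ :=
  letI := Classical.decEq (Multiset G)
  max (z - z').card (z' - z).card

/-- The catenary degree of `B ∈ B(G)`: the least `N` such that any two factorizations
of `B` can be concatenated by a chain of factorizations with consecutive distances `≤ N`. -/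
noncomputable def catenaryDeg {G : Type*} [AddCommGroup G] (B : Multiset G) : ℕ :=
  sInf {N : ℕ | ∀ z z', IsFactorization B z → IsFactorization B z' →
    Relation.ReflTransGen (fun x y => IsFactorization B y ∧ factDist x y ≤ N) z z'}

/-- The tame degree `t(A, U)` of `A ∈ B(G)` with respect to the atom `U`. -/
noncomputable def tameDeg {G : Type*} [AddCommGroup G] (A U : Multiset G) : ℕ :=
  sInf {N : ℕ | ∀ z, IsFactorization A z →
    (∃ z', IsFactorization A z' ∧ U ∈ z') →
    ∃ z', IsFactorization A z' ∧ U ∈ z' ∧ factDist z z' ≤ N}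

/-- The set of (positive) tame degrees of `B(G)`. -/
noncomputable def TaSet (G : Type*) [AddCommGroup G] : Set ℕ :=
  {n | 0 < n ∧ ∃ A U : Multiset G, A.sum = 0 ∧ IsMinZeroSum U ∧ tameDeg A U = n}

/-- The Davenport constant of `G`: the supremum of lengths of minimal zero-sum sequences. -/
noncomputable def davenport (G : Type*) [AddCommGroup G] : ℕ :=
  sSup {n : ℕ | ∃ A : Multiset G, IsMinZeroSum A ∧ A.card = n}

/-!
Write `s = e₁ + e₂`. Every subsequence of `UV = s⁴ e₁² e₂²` is `s^c e₁^a e₂^b` with `c ≤ 4`,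
`a, b ≤ 2`, and its sum `(c + a) e₁ + (c + b) e₂` vanishes iff `3 ∣ c + a` and `3 ∣ c + b`.
So the atoms dividing `UV` are `U = s³`, `V = s e₁² e₂²` and `W = s² e₁ e₂`, and
`U^p V^q W^r = UV` forces `(p, q, r) = (1, 1, 0)` or `(0, 0, 2)`. Only `U·V` contains `U`, and it
has distance `2` from `W·W`, so `t(UV, U) = 2`.
-/

open Multiset

section FactDist

variable {G : Type*} [AddCommGroup G]

theorem factDist_self (z : Multiset (Multiset G)) : factDist z z = 0 := by
  simp [factDist]

theorem factDist_of_disjoint {z z' : Multiset (Multiset G)} (h : Disjoint z z') :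
    factDist z z' = max z.card z'.card := by
  -- the instance `factDist` is defined with
  let _ := Classical.decEq (Multiset G)
  have hsub : ∀ {s t : Multiset (Multiset G)}, Disjoint s t → s - t = s := fun hst => by
    rw [← sub_inter, inter_eq_zero_iff_disjoint.2 hst, Multiset.sub_zero]
  simp only [factDist, hsub h, hsub h.symm]

theorem tameDeg_eq_factDist {A U : Multiset G} {z₁ z₂ : Multiset (Multiset G)}
    (hA : ∀ z, IsFactorization A z ↔ z = z₁ ∨ z = z₂) (h₁ : U ∈ z₁) (h₂ : U ∉ z₂) :
    tameDeg A U = factDist z₂ z₁ := by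
  suffices h : {N : ℕ | ∀ z, IsFactorization A z → (∃ z', IsFactorization A z' ∧ U ∈ z') →
      ∃ z', IsFactorization A z' ∧ U ∈ z' ∧ factDist z z' ≤ N} = Set.Ici (factDist z₂ z₁) by
    rw [tameDeg, h, csInf_Ici]
  have hU : ∀ z', IsFactorization A z' → U ∈ z' → z' = z₁ := fun z' hz' hUz' =>
    ((hA z').1 hz').resolve_right (by rintro rfl; exact h₂ hUz')
  ext N
  constructor
  · intro hN
    obtain ⟨z', hz', hUz', hd⟩ := hN z₂ ((hA z₂).2 (.inr rfl)) ⟨z₁, (hA z₁).2 (.inl rfl), h₁⟩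
    rwa [← hU z' hz' hUz']
  · intro hN z hz _
    refine ⟨z₁, (hA z₁).2 (.inl rfl), h₁, ?_⟩
    rcases (hA z).1 hz with rfl | rfl
    · exact (factDist_self _).trans_le N.zero_le
    · exact hN

end FactDist

namespace Multiset

variable {α : Type*}

def replicate₃ (c a b : ℕ) (x y z : α) : Multiset α :=
  replicate c x + replicate a y + replicate b z

theorem pair_eq_replicate₃ (x y z : α) : ({x, y} : Multiset α) = replicate₃ 1 1 0 x y z := by
  simp [replicate₃]

theorem replicate_eq_replicate₃ (x y : α) (n : ℕ) (z : α) :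
    replicate n z = replicate₃ 0 0 n x y z := by
  simp [replicate₃]

section Replicate₃

variable {x y z : α}

@[simp]
theorem card_replicate₃ (c a b : ℕ) : (replicate₃ c a b x y z).card = c + a + b := by
  simp [replicate₃]

theorem replicate₃_add (c a b c' a' b' : ℕ) :
    replicate₃ c a b x y z + replicate₃ c' a' b' x y z =
      replicate₃ (c + c') (a + a') (b + b') x y z := by
  simp only [replicate₃, replicate_add]
  abel

theorem nsmul_replicate₃ (n c a b : ℕ) :
    n • replicate₃ c a b x y z = replicate₃ (n * c) (n * a) (n * b) x y z := by
  simp only [replicate₃, nsmul_add, nsmul_replicate]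

theorem eq_or_eq_or_eq_of_mem_replicate₃ {w : α} {c a b : ℕ}
    (hw : w ∈ replicate₃ c a b x y z) : w = x ∨ w = y ∨ w = z := by
  simp only [replicate₃, mem_add, mem_replicate] at hw
  tauto

theorem sum_replicate₃ [AddCommMonoid α] (c a b : ℕ) :
    (replicate₃ c a b x y z).sum = c • x + a • y + b • z := by
  simp only [replicate₃, sum_add, sum_replicate]

theorem sum_replicate₃_replicate₃ (p q r c₁ a₁ b₁ c₂ a₂ b₂ c₃ a₃ b₃ : ℕ) :
    (replicate₃ p q r (replicate₃ c₁ a₁ b₁ x y z) (replicate₃ c₂ a₂ b₂ x y z)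
        (replicate₃ c₃ a₃ b₃ x y z)).sum =
      replicate₃ (p * c₁ + q * c₂ + r * c₃) (p * a₁ + q * a₂ + r * a₃)
        (p * b₁ + q * b₂ + r * b₃) x y z := by
  rw [sum_replicate₃, nsmul_replicate₃, nsmul_replicate₃, nsmul_replicate₃, replicate₃_add,
    replicate₃_add]

variable [DecidableEq α] (hxy : x ≠ y) (hxz : x ≠ z) (hyz : y ≠ z)
include hxy hxz hyz

theorem count_replicate₃ (c a b : ℕ) :
    count x (replicate₃ c a b x y z) = c ∧ count y (replicate₃ c a b x y z) = a ∧
      count z (replicate₃ c a b x y z) = b := by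
  simp [replicate₃, count_replicate, hxy, hxz, hyz, hxy.symm, hxz.symm, hyz.symm]

theorem replicate₃_inj {c a b c' a' b' : ℕ} :
    replicate₃ c a b x y z = replicate₃ c' a' b' x y z ↔ c = c' ∧ a = a' ∧ b = b' := by
  refine ⟨fun h => ?_, by rintro ⟨rfl, rfl, rfl⟩; rfl⟩
  obtain ⟨hc, ha, hb⟩ := count_replicate₃ hxy hxz hyz c a b
  rw [h] at hc ha hb
  obtain ⟨hc', ha', hb'⟩ := count_replicate₃ hxy hxz hyz c' a' b'
  omega

theorem eq_replicate₃_count {M : Multiset α} (hM : ∀ w ∈ M, w = x ∨ w = y ∨ w = z) :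
    M = replicate₃ (count x M) (count y M) (count z M) x y z := by
  ext w
  simp only [replicate₃, count_add, count_replicate]
  by_cases hx : x = w
  · subst hx; simp [hxy.symm, hxz.symm]
  by_cases hy : y = w
  · subst hy; simp [hx, hyz.symm]
  by_cases hz : z = w
  · subst hz; simp [hx, hy]
  simp only [hx, hy, hz, if_false, add_zero, count_eq_zero]
  intro hw
  rcases hM w hw with rfl | rfl | rfl <;> contradiction

theorem le_replicate₃_iff {T : Multiset α} {c a b : ℕ} :
    T ≤ replicate₃ c a b x y z ↔
      ∃ c' ≤ c, ∃ a' ≤ a, ∃ b' ≤ b, T = replicate₃ c' a' b' x y z := by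
  constructor
  · intro hT
    have hmem : ∀ w ∈ T, w = x ∨ w = y ∨ w = z := fun w hw =>
      eq_or_eq_or_eq_of_mem_replicate₃ (mem_of_le hT hw)
    obtain ⟨hc, ha, hb⟩ := count_replicate₃ hxy hxz hyz c a b
    refine ⟨_, ?_, _, ?_, _, ?_, eq_replicate₃_count hxy hxz hyz hmem⟩
    · exact hc ▸ count_le_of_le x hT
    · exact ha ▸ count_le_of_le y hT
    · exact hb ▸ count_le_of_le z hT
  · rintro ⟨c', hc, a', ha, b', hb, rfl⟩
    exact add_le_add (add_le_add ((replicate_le_replicate _).2 hc)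
      ((replicate_le_replicate _).2 ha)) ((replicate_le_replicate _).2 hb)

end Replicate₃

end Multiset

section ZeroSum

variable {G : Type*} [AddCommGroup G]

theorem isMinZeroSum_replicate₃_iff {x y z : G} (hxy : x ≠ y) (hxz : x ≠ z) (hyz : y ≠ z)
    {c a b : ℕ} :
    IsMinZeroSum (replicate₃ c a b x y z) ↔
      c + a + b ≠ 0 ∧ c • x + a • y + b • z = 0 ∧
        ∀ c' ≤ c, ∀ a' ≤ a, ∀ b' ≤ b, c' + a' + b' ≠ 0 → c' • x + a' • y + b' • z = 0 →
          c' = c ∧ a' = a ∧ b' = b := by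
  classical
  simp only [IsMinZeroSum, ne_eq, ← card_eq_zero, card_replicate₃, sum_replicate₃]
  refine and_congr_right fun _ => and_congr_right fun _ => ⟨fun h => ?_, fun h => ?_⟩
  · intro c' hc a' ha b' hb h0 hsum
    refine (replicate₃_inj hxy hxz hyz).1 (h _ ?_ ?_ ?_)
    · exact (le_replicate₃_iff hxy hxz hyz).2 ⟨c', hc, a', ha, b', hb, rfl⟩
    · rwa [card_replicate₃]
    · rwa [sum_replicate₃]
  · intro T hT h0 hsum
    obtain ⟨c', hc, a', ha, b', hb, rfl⟩ := (le_replicate₃_iff hxy hxz hyz).1 hT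
    rw [card_replicate₃] at h0
    rw [sum_replicate₃] at hsum
    obtain ⟨rfl, rfl, rfl⟩ := h c' hc a' ha b' hb h0 hsum
    rfl

end ZeroSum

section Independent

variable {G : Type*} [AddCommGroup G] {e₁ e₂ : G}

theorem nsmul_add_nsmul_eq_zero_iff
    (hind : ∀ x : G, x ∈ AddSubgroup.zmultiples e₁ → x ∈ AddSubgroup.zmultiples e₂ → x = 0)
    {a b : ℕ} : a • e₁ + b • e₂ = 0 ↔ addOrderOf e₁ ∣ a ∧ addOrderOf e₂ ∣ b := by
  simp only [addOrderOf_dvd_iff_nsmul_eq_zero]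
  refine ⟨fun h => ?_, fun ⟨ha, hb⟩ => by rw [ha, hb, add_zero]⟩
  have ha : a • e₁ = 0 := hind _ (nsmul_mem (AddSubgroup.mem_zmultiples e₁) a) <| by
    rw [eq_neg_of_add_eq_zero_left h]
    exact neg_mem (nsmul_mem (AddSubgroup.mem_zmultiples e₂) b)
  rw [ha, zero_add] at h
  exact ⟨ha, h⟩

variable (h1 : addOrderOf e₁ = 3) (h2 : addOrderOf e₂ = 3)
  (hind : ∀ x : G, x ∈ AddSubgroup.zmultiples e₁ → x ∈ AddSubgroup.zmultiples e₂ → x = 0)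
include h1 h2 hind

theorem nsmul_add_add_nsmul_eq_zero_iff {c a b : ℕ} :
    c • (e₁ + e₂) + a • e₁ + b • e₂ = 0 ↔ 3 ∣ c + a ∧ 3 ∣ c + b := by
  have h : c • (e₁ + e₂) + a • e₁ + b • e₂ = (c + a) • e₁ + (c + b) • e₂ := by
    rw [add_nsmul, add_nsmul, nsmul_add]
    abel
  rw [h, nsmul_add_nsmul_eq_zero_iff hind, h1, h2]

theorem add_ne_left_and_add_ne_right_and_ne : e₁ + e₂ ≠ e₁ ∧ e₁ + e₂ ≠ e₂ ∧ e₁ ≠ e₂ := by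
  have he₁ : e₁ ≠ 0 := by rintro rfl; simp at h1
  have he₂ : e₂ ≠ 0 := by rintro rfl; simp at h2
  refine ⟨add_ne_left.2 he₂, add_ne_right.2 he₁, fun h => he₁ ?_⟩
  exact hind e₁ (AddSubgroup.mem_zmultiples e₁) (h ▸ AddSubgroup.mem_zmultiples e₂)

theorem isMinZeroSum_replicate₃_iff_dvd {c a b : ℕ} :
    IsMinZeroSum (replicate₃ c a b (e₁ + e₂) e₁ e₂) ↔
      c + a + b ≠ 0 ∧ 3 ∣ c + a ∧ 3 ∣ c + b ∧
        ∀ c' ≤ c, ∀ a' ≤ a, ∀ b' ≤ b, c' + a' + b' ≠ 0 → 3 ∣ c' + a' → 3 ∣ c' + b' →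
          c' = c ∧ a' = a ∧ b' = b := by
  obtain ⟨hxy, hxz, hyz⟩ := add_ne_left_and_add_ne_right_and_ne h1 h2 hind
  simp only [isMinZeroSum_replicate₃_iff hxy hxz hyz, nsmul_add_add_nsmul_eq_zero_iff h1 h2 hind,
    and_imp, and_assoc]

theorem isMinZeroSum_iff_of_le_replicate₃ {A : Multiset G}
    (hA : A ≤ replicate₃ 4 2 2 (e₁ + e₂) e₁ e₂) :
    IsMinZeroSum A ↔ A = replicate₃ 3 0 0 (e₁ + e₂) e₁ e₂ ∨
      A = replicate₃ 1 2 2 (e₁ + e₂) e₁ e₂ ∨ A = replicate₃ 2 1 1 (e₁ + e₂) e₁ e₂ := by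
  classical
  obtain ⟨hxy, hxz, hyz⟩ := add_ne_left_and_add_ne_right_and_ne h1 h2 hind
  obtain ⟨c, hc, a, ha, b, hb, rfl⟩ := (le_replicate₃_iff hxy hxz hyz).1 hA
  simp only [isMinZeroSum_replicate₃_iff_dvd h1 h2 hind, replicate₃_inj hxy hxz hyz]
  constructor
  · rintro ⟨h0, hca, hcb, hmin⟩
    -- `UV` itself contains the zero-sum sequence `U`.
    have hne : ¬(c = 4 ∧ a = 2 ∧ b = 2) := by
      rintro ⟨rfl, rfl, rfl⟩
      have := hmin 3 (by norm_num) 0 (by norm_num) 0 (by norm_num) (by norm_num) (by norm_num)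
        (by norm_num)
      omega
    omega
  · rintro (⟨rfl, rfl, rfl⟩ | ⟨rfl, rfl, rfl⟩ | ⟨rfl, rfl, rfl⟩) <;>
      exact ⟨by omega, by omega, by omega, fun _ _ _ _ _ _ _ _ _ => by omega⟩

theorem isFactorization_replicate₃_iff (z : Multiset (Multiset G)) :
    IsFactorization (replicate₃ 4 2 2 (e₁ + e₂) e₁ e₂) z ↔
      z = {replicate₃ 3 0 0 (e₁ + e₂) e₁ e₂, replicate₃ 1 2 2 (e₁ + e₂) e₁ e₂} ∨
        z = replicate 2 (replicate₃ 2 1 1 (e₁ + e₂) e₁ e₂) := by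
  classical
  obtain ⟨hxy, hxz, hyz⟩ := add_ne_left_and_add_ne_right_and_ne h1 h2 hind
  set U := replicate₃ 3 0 0 (e₁ + e₂) e₁ e₂
  set V := replicate₃ 1 2 2 (e₁ + e₂) e₁ e₂
  set W := replicate₃ 2 1 1 (e₁ + e₂) e₁ e₂
  have hUV : U ≠ V := by simp [U, V, replicate₃_inj hxy hxz hyz]
  have hUW : U ≠ W := by simp [U, W, replicate₃_inj hxy hxz hyz]
  have hVW : V ≠ W := by simp [V, W, replicate₃_inj hxy hxz hyz]
  have hatom : ∀ A ∈ z, z.sum = replicate₃ 4 2 2 (e₁ + e₂) e₁ e₂ →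
      (IsMinZeroSum A ↔ A = U ∨ A = V ∨ A = W) :=
    fun A hA hz => isMinZeroSum_iff_of_le_replicate₃ h1 h2 hind (hz ▸ le_sum_of_mem hA)
  rw [pair_eq_replicate₃ U V W, replicate_eq_replicate₃ U V 2 W]
  constructor
  · rintro ⟨hmin, hz⟩
    have hz' := eq_replicate₃_count hUV hUW hVW fun A hA => (hatom A hA hz).1 (hmin A hA)
    rw [hz', sum_replicate₃_replicate₃, replicate₃_inj hxy hxz hyz] at hz
    rw [hz', replicate₃_inj hUV hUW hVW, replicate₃_inj hUV hUW hVW]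
    omega
  · intro hz
    have hsum : z.sum = replicate₃ 4 2 2 (e₁ + e₂) e₁ e₂ := by
      rcases hz with rfl | rfl <;> rw [sum_replicate₃_replicate₃]
    refine ⟨fun A hA => (hatom A hA hsum).2 ?_, hsum⟩
    rcases hz with rfl | rfl <;> exact eq_or_eq_or_eq_of_mem_replicate₃ hA

end Independent

theorem stmt13_general (G : Type*) [AddCommGroup G] (e₁ e₂ : G)
    (h1 : addOrderOf e₁ = 3) (h2 : addOrderOf e₂ = 3)
    (hind : ∀ x : G, x ∈ AddSubgroup.zmultiples e₁ → x ∈ AddSubgroup.zmultiples e₂ → x = 0) :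
    (∀ z, IsFactorization
        (Multiset.replicate 3 (e₁ + e₂) +
          ((e₁ + e₂) ::ₘ (Multiset.replicate 2 e₁ + Multiset.replicate 2 e₂))) z ↔
      z = ({Multiset.replicate 3 (e₁ + e₂),
            (e₁ + e₂) ::ₘ (Multiset.replicate 2 e₁ + Multiset.replicate 2 e₂)} :
              Multiset (Multiset G)) ∨
      z = Multiset.replicate 2 ({e₁, e₂, e₁ + e₂, e₁ + e₂} : Multiset G)) ∧
    tameDeg
      (Multiset.replicate 3 (e₁ + e₂) +
        ((e₁ + e₂) ::ₘ (Multiset.replicate 2 e₁ + Multiset.replicate 2 e₂)))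
      (Multiset.replicate 3 (e₁ + e₂)) = 2 := by
  have hB : replicate 3 (e₁ + e₂) + ((e₁ + e₂) ::ₘ (replicate 2 e₁ + replicate 2 e₂)) =
      replicate₃ 4 2 2 (e₁ + e₂) e₁ e₂ := by
    simp [replicate₃, replicate_succ, cons_swap]
  have hU : replicate 3 (e₁ + e₂) = replicate₃ 3 0 0 (e₁ + e₂) e₁ e₂ := by
    simp [replicate₃]
  have hV : (e₁ + e₂) ::ₘ (replicate 2 e₁ + replicate 2 e₂) =
      replicate₃ 1 2 2 (e₁ + e₂) e₁ e₂ := by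
    simp [replicate₃, replicate_succ, cons_swap]
  have hW : ({e₁, e₂, e₁ + e₂, e₁ + e₂} : Multiset G) = replicate₃ 2 1 1 (e₁ + e₂) e₁ e₂ := by
    simp [replicate₃, replicate_succ, cons_swap, ← cons_zero]
  rw [hB, hU, hV, hW]
  have hfact := isFactorization_replicate₃_iff h1 h2 hind
  refine ⟨hfact, ?_⟩
  rw [tameDeg_eq_factDist hfact (by simp) ?_, factDist_of_disjoint ?_]
  · simp
  · simp only [disjoint_iff_ne, mem_replicate, insert_eq_cons, mem_cons, mem_singleton]
    rintro _ ⟨-, rfl⟩ _ (rfl | rfl) <;> exact ne_of_apply_ne card (by simp)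
  · exact fun h => by simpa using congrArg card (eq_of_mem_replicate h)

theorem stmt13 (G : Type*) [AddCommGroup G]
    (hG : ∀ x : G, x ≠ 0 → addOrderOf x = 3) (e₁ e₂ : G)
    (h1 : addOrderOf e₁ = 3) (h2 : addOrderOf e₂ = 3)
    (hind : ∀ x : G, x ∈ AddSubgroup.zmultiples e₁ → x ∈ AddSubgroup.zmultiples e₂ → x = 0) :
    (∀ z, IsFactorization
        (Multiset.replicate 3 (e₁ + e₂) +
          ((e₁ + e₂) ::ₘ (Multiset.replicate 2 e₁ + Multiset.replicate 2 e₂))) z ↔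
      z = ({Multiset.replicate 3 (e₁ + e₂),
            (e₁ + e₂) ::ₘ (Multiset.replicate 2 e₁ + Multiset.replicate 2 e₂)} :
              Multiset (Multiset G)) ∨
      z = Multiset.replicate 2 ({e₁, e₂, e₁ + e₂, e₁ + e₂} : Multiset G)) ∧
    tameDeg
      (Multiset.replicate 3 (e₁ + e₂) +
        ((e₁ + e₂) ::ₘ (Multiset.replicate 2 e₁ + Multiset.replicate 2 e₂)))
      (Multiset.replicate 3 (e₁ + e₂)) = 2 :=
  stmt13_general G e₁ e₂ h1 h2 hind
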